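/- Assume 𝔼[e^{-sX}] < ∞ for all s ∈ ℝ and that β is in the strong disorder regime, i.e. f(β) < 0 where f(β) = log(ℓ−1) + log λ_β + β·𝔼[X e^{-βX}]/λ_β. Then r(2) = λ_{2β}/((ℓ−1)λ_β²) > 1, and the second moment 𝔼[Z_n²] tends to infinity as n → ∞; in particular 𝔼[Z_n²] ≥ ((ℓ−1)/ℓ)·r(2)^n for all n ≥ 1. -/

import Mathlib

open MeasureTheory Real ProbabilityTheory

/-- The Laplace transform `λ_β = 𝔼[e^{-βX}]` of the conductance law. -/
noncomputable def lam {Ω : Type*} [MeasurableSpace Ω] (P : Measure Ω) (X : Ω → ℝ) (β : ℝ) : ℝ :=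
  ∫ ω, Real.exp (-β * X ω) ∂P

/-- The annealed critical point `h_a(β) = log(ℓ-1) + log λ_β`. -/
noncomputable def annealedCP {Ω : Type*} [MeasurableSpace Ω] (P : Measure Ω) (X : Ω → ℝ)
    (ℓ : ℕ) (β : ℝ) : ℝ :=
  Real.log ((ℓ : ℝ) - 1) + Real.log (lam P X β)

/-- A (nonempty) word indexing an edge of the rooted degree-`ℓ` tree: a first letter in
`Fin ℓ` together with a list of subsequent letters in `Fin (ℓ-1)`.  The `n`-step
self-avoiding paths from the root correspond to the words of length `n` (list length
`n-1`), and the edges along such a path are the nonempty prefixes of the word. -/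
abbrev TreeWord (ℓ : ℕ) : Type := Fin ℓ × List (Fin (ℓ - 1))

/-- The normalized partition function
`Z_n = (ℓ(ℓ-1)^{n-1} λ_β^n)⁻¹ Σ_{|w|=n} exp(-β Σ_{k=1}^n X_{(w_1,…,w_k)})`, with `Z_0 = 1`.
The inner sums run over the first letter `a : Fin ℓ` and the tail `g`, and the `k`-th edge
of the path `w = (a, List.ofFn g)` is the prefix `(a, (List.ofFn g).take (k-1))`. -/
noncomputable def Zpart {Ω : Type*} (ℓ : ℕ) (β lamβ : ℝ)
    (Xf : TreeWord ℓ → Ω → ℝ) : ℕ → Ω → ℝ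
  | 0 => fun _ => 1
  | n + 1 => fun ω =>
      ((ℓ : ℝ) * ((ℓ : ℝ) - 1) ^ n * lamβ ^ (n + 1))⁻¹ *
        ∑ a : Fin ℓ, ∑ g : Fin n → Fin (ℓ - 1),
          Real.exp (-β * ∑ k ∈ Finset.range (n + 1), Xf (a, (List.ofFn g).take k) ω)

/-!
Under the law tilted by `e^{-βX}/λ_β`, Jensen's inequality for `exp` gives
`λ_{2β}/λ_β ≥ exp(-β 𝔼[X e^{-βX}]/λ_β)`, and `f(β) < 0` says exactly that the right-hand side
exceeds `(ℓ-1)λ_β`; hence `r(2) > 1`. For the lower bound, expand `Z_n²` as a double sum over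
pairs of paths and keep only the diagonal: each of the `ℓ(ℓ-1)^{n-1}` paths has `n` distinct
i.i.d. edges, so its squared weight has mean `λ_{2β}^n`, which after normalization is
`((ℓ-1)/ℓ) r(2)^n`.
-/

open Finset

lemma exp_integral_mul_div_integral_mul_integral_le {α : Type*} [MeasurableSpace α]
    {μ : Measure α} {w Y : α → ℝ} (hw : ∀ x, 0 ≤ w x) (hw_int : Integrable w μ)
    (hwY : Integrable (fun x => w x * Y x) μ) (hwexp : Integrable (fun x => w x * exp (Y x)) μ)
    (hw_pos : 0 < ∫ x, w x ∂μ) :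
    exp ((∫ x, w x * Y x ∂μ) / ∫ x, w x ∂μ) * ∫ x, w x ∂μ ≤ ∫ x, w x * exp (Y x) ∂μ := by
  set t := (∫ x, w x * Y x ∂μ) / ∫ x, w x ∂μ
  have tangent : ∀ x, exp t * ((1 - t) * w x + w x * Y x) ≤ w x * exp (Y x) := fun x => calc
    _ = w x * (exp t * (Y x - t + 1)) := by ring
    _ ≤ w x * (exp t * exp (Y x - t)) := by gcongr; exacts [hw x, add_one_le_exp _]
    _ = w x * exp (Y x) := by rw [← exp_add, add_sub_cancel]
  have hint := integral_mono (((hw_int.const_mul _).add hwY).const_mul (exp t)) hwexp tangent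
  simp only [Pi.add_apply] at hint
  rw [integral_const_mul, integral_add (hw_int.const_mul _) hwY, integral_const_mul] at hint
  have ht : t * ∫ x, w x ∂μ = ∫ x, w x * Y x ∂μ := div_mul_cancel₀ _ hw_pos.ne'
  calc exp t * ∫ x, w x ∂μ = exp t * ((1 - t) * ∫ x, w x ∂μ + ∫ x, w x * Y x ∂μ) := by
        congr 1; linear_combination ht
    _ ≤ _ := hint

lemma lam_pos {Ω : Type*} [MeasurableSpace Ω] {P : Measure Ω} [IsProbabilityMeasure P]
    {X : Ω → ℝ} {β : ℝ} (h : Integrable (fun ω => exp (-β * X ω)) P) : 0 < lam P X β :=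
  integral_exp_pos h

lemma exp_neg_mul_integral_div_lam_mul_lam_le {Ω : Type*} [MeasurableSpace Ω] {P : Measure Ω}
    [IsProbabilityMeasure P] {X : Ω → ℝ} {β : ℝ}
    (hInt : ∀ s : ℝ, Integrable (fun ω => exp (-s * X ω)) P) :
    exp (-β * (∫ ω, X ω * exp (-β * X ω) ∂P) / lam P X β) * lam P X β ≤ lam P X (2 * β) := by
  have hXexp : Integrable (fun ω => X ω * exp (-β * X ω)) P := by
    have hset : integrableExpSet X P = Set.univ :=
      Set.eq_univ_of_forall fun t => by simpa [integrableExpSet] using hInt (-t)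
    have hmem : -β ∈ interior (integrableExpSet X P) := by simp [hset]
    simpa using integrable_pow_mul_exp_of_mem_interior_integrableExpSet hmem 1
  have h := exp_integral_mul_div_integral_mul_integral_le (μ := P) (Y := fun ω => -β * X ω)
    (fun ω => (exp_pos _).le) (hInt β)
    ((hXexp.const_mul (-β)).congr (.of_forall fun ω => by ring))
    ((hInt (2 * β)).congr (.of_forall fun ω => by simp only [← exp_add]; ring_nf))
    (lam_pos (hInt β))
  have hmean : ∫ ω, exp (-β * X ω) * (-β * X ω) ∂P = -β * ∫ ω, X ω * exp (-β * X ω) ∂P := by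
    rw [← integral_const_mul]; congr 1; ext ω; ring
  have hsq : ∫ ω, exp (-β * X ω) * exp (-β * X ω) ∂P = lam P X (2 * β) := by
    simp only [lam, ← exp_add]; congr 1; ext ω; ring_nf
  rwa [hmean, hsq] at h

lemma one_lt_lam_two_mul_div {Ω : Type*} [MeasurableSpace Ω] {P : Measure Ω}
    [IsProbabilityMeasure P] {X : Ω → ℝ} {ℓ : ℕ} (hℓ : 2 ≤ ℓ) {β : ℝ}
    (hInt : ∀ s : ℝ, Integrable (fun ω => exp (-s * X ω)) P)
    (hstrong : annealedCP P X ℓ β + β * (∫ ω, X ω * exp (-β * X ω) ∂P) / lam P X β < 0) :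
    1 < lam P X (2 * β) / (((ℓ : ℝ) - 1) * lam P X β ^ 2) := by
  have hℓ1 : (0 : ℝ) < (ℓ : ℝ) - 1 := by
    have : (2 : ℝ) ≤ ℓ := by exact_mod_cast hℓ
    linarith
  have hlam := lam_pos (hInt β)
  have hlt : ((ℓ : ℝ) - 1) * lam P X β
      < exp (-β * (∫ ω, X ω * exp (-β * X ω) ∂P) / lam P X β) := by
    rw [← exp_log (mul_pos hℓ1 hlam), exp_lt_exp, log_mul hℓ1.ne' hlam.ne', neg_mul, neg_div]
    unfold annealedCP at hstrong
    linarith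
  rw [one_lt_div (by positivity), sq, ← mul_assoc]
  exact (mul_lt_mul_of_pos_right hlt hlam).trans_le (exp_neg_mul_integral_div_lam_mul_lam_le hInt)

section IID

variable {Ω ι : Type*} [MeasurableSpace Ω] {P : Measure Ω} {X : Ω → ℝ} {Y : ι → Ω → ℝ}

lemma integral_exp_mul_sum_of_iid (hindep : iIndepFun Y P)
    (hident : ∀ i, IdentDistrib (Y i) X P P) (s : Finset ι) (t : ℝ) :
    ∫ ω, exp (t * ∑ i ∈ s, Y i ω) ∂P = mgf X P t ^ #s := by
  have hsum := hindep.mgf_sum₀ (fun i => (hident i).aemeasurable_fst) s (t := t)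
  rw [prod_eq_pow_card fun i _ => mgf_congr_of_identDistrib _ _ (hident i) t] at hsum
  simpa only [mgf, Finset.sum_apply] using hsum

lemma memLp_two_exp_mul_sum_of_iid [IsProbabilityMeasure P] (hindep : iIndepFun Y P)
    (hident : ∀ i, IdentDistrib (Y i) X P P) (s : Finset ι) {t : ℝ}
    (hX : Integrable (fun ω => exp (2 * t * X ω)) P) :
    MemLp (fun ω => exp (t * ∑ i ∈ s, Y i ω)) 2 P := by
  have hmeas : ∀ i, AEMeasurable (Y i) P := fun i => (hident i).aemeasurable_fst
  refine (memLp_two_iff_integrable_sq (by fun_prop)).mpr (.of_integral_ne_zero ?_)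
  simp_rw [← exp_nat_mul, Nat.cast_ofNat, ← mul_assoc]
  rw [integral_exp_mul_sum_of_iid hindep hident]
  exact pow_ne_zero _ (mgf_pos hX).ne'

end IID

lemma sum_integral_sq_le_integral_sq_sum {α ι : Type*} [MeasurableSpace α] {μ : Measure α}
    [Fintype ι] {f : ι → α → ℝ} (hf : ∀ i x, 0 ≤ f i x) (hf_L2 : ∀ i, MemLp (f i) 2 μ) :
    ∑ i, ∫ x, f i x ^ 2 ∂μ ≤ ∫ x, (∑ i, f i x) ^ 2 ∂μ := by
  rw [← integral_finsetSum _ fun i _ => (hf_L2 i).integrable_sq]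
  exact integral_mono (integrable_finsetSum _ fun i _ => (hf_L2 i).integrable_sq)
    (memLp_finsetSum _ fun i _ => hf_L2 i).integrable_sq
    fun x => sum_sq_le_sq_sum_of_nonneg fun i _ => hf i x

def pathEdges {ℓ m : ℕ} (a : Fin ℓ) (g : Fin m → Fin (ℓ - 1)) : Finset (TreeWord ℓ) :=
  (range (m + 1)).image fun k => (a, (List.ofFn g).take k)

lemma injOn_pathEdges {ℓ m : ℕ} (a : Fin ℓ) (g : Fin m → Fin (ℓ - 1)) :
    Set.InjOn (fun k => ((a, (List.ofFn g).take k) : TreeWord ℓ)) (range (m + 1)) := by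
  intro k hk k' hk' h
  have hlen := congrArg (fun w : TreeWord ℓ => w.2.length) h
  simp only [coe_range, Set.mem_Iio, Nat.lt_succ_iff] at hk hk'
  simpa [min_eq_left hk, min_eq_left hk'] using hlen

lemma card_pathEdges {ℓ m : ℕ} (a : Fin ℓ) (g : Fin m → Fin (ℓ - 1)) :
    #(pathEdges a g) = m + 1 := by
  rw [pathEdges, card_image_of_injOn (injOn_pathEdges a g), card_range]

lemma sum_pathEdges {ℓ m : ℕ} (a : Fin ℓ) (g : Fin m → Fin (ℓ - 1)) (f : TreeWord ℓ → ℝ) :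
    ∑ u ∈ pathEdges a g, f u = ∑ k ∈ range (m + 1), f (a, (List.ofFn g).take k) :=
  sum_image (injOn_pathEdges a g)

lemma Zpart_succ_eq_sum_pathEdges {Ω : Type*} (ℓ : ℕ) (β lamβ : ℝ) (Xf : TreeWord ℓ → Ω → ℝ)
    (m : ℕ) (ω : Ω) :
    Zpart ℓ β lamβ Xf (m + 1) ω = ((ℓ : ℝ) * ((ℓ : ℝ) - 1) ^ m * lamβ ^ (m + 1))⁻¹ *
      ∑ p : Fin ℓ × (Fin m → Fin (ℓ - 1)), exp (-β * ∑ u ∈ pathEdges p.1 p.2, Xf u ω) := by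
  simp only [Zpart, sum_pathEdges, Fintype.sum_prod_type]

lemma card_paths (ℓ m : ℕ) (hℓ : 1 ≤ ℓ) :
    (Fintype.card (Fin ℓ × (Fin m → Fin (ℓ - 1))) : ℝ) = ℓ * ((ℓ : ℝ) - 1) ^ m := by
  simp [Fintype.card_prod, Nat.cast_sub hℓ]

lemma le_integral_Zpart_succ_sq {Ω : Type*} [MeasurableSpace Ω] {P : Measure Ω}
    [IsProbabilityMeasure P] {X : Ω → ℝ} {ℓ : ℕ} (hℓ : 2 ≤ ℓ) {β : ℝ}
    (h2β : Integrable (fun ω => exp (-(2 * β) * X ω)) P)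
    {Xf : TreeWord ℓ → Ω → ℝ} (hindep : iIndepFun Xf P)
    (hident : ∀ w, IdentDistrib (Xf w) X P P) (m : ℕ) :
    (((ℓ : ℝ) - 1) / ℓ) * (lam P X (2 * β) / (((ℓ : ℝ) - 1) * lam P X β ^ 2)) ^ (m + 1)
      ≤ ∫ ω, (Zpart ℓ β (lam P X β) Xf (m + 1) ω) ^ 2 ∂P := by
  set c := (ℓ : ℝ) * ((ℓ : ℝ) - 1) ^ m * lam P X β ^ (m + 1) with hc
  set W : Fin ℓ × (Fin m → Fin (ℓ - 1)) → Ω → ℝ :=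
    fun p ω => exp (-β * ∑ u ∈ pathEdges p.1 p.2, Xf u ω)
  have hW_L2 : ∀ p, MemLp (W p) 2 P := fun p =>
    memLp_two_exp_mul_sum_of_iid hindep hident _ (by simpa only [mul_neg, neg_mul] using h2β)
  have hW_sq : ∀ p, ∫ ω, W p ω ^ 2 ∂P = lam P X (2 * β) ^ (m + 1) := fun p => by
    simp_rw [W, ← exp_nat_mul, Nat.cast_ofNat, ← mul_assoc,
      integral_exp_mul_sum_of_iid hindep hident, card_pathEdges]
    rw [show 2 * -β = -(2 * β) by ring]
    rfl
  have hℓ1 : (0 : ℝ) < (ℓ : ℝ) - 1 := by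
    have : (2 : ℝ) ≤ ℓ := by exact_mod_cast hℓ
    linarith
  calc (((ℓ : ℝ) - 1) / ℓ) * (lam P X (2 * β) / (((ℓ : ℝ) - 1) * lam P X β ^ 2)) ^ (m + 1)
      = c⁻¹ ^ 2 * ∑ p, ∫ ω, W p ω ^ 2 ∂P := by
        rw [sum_congr rfl fun p _ => hW_sq p, sum_const, card_univ, nsmul_eq_mul,
          card_paths ℓ m (by omega), hc, div_pow, mul_pow, ← pow_mul]
        generalize (ℓ : ℝ) - 1 = K at hℓ1 ⊢
        field_simp
        ring
    _ ≤ c⁻¹ ^ 2 * ∫ ω, (∑ p, W p ω) ^ 2 ∂P := by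
        gcongr
        exact sum_integral_sq_le_integral_sq_sum (fun p ω => (exp_pos _).le) hW_L2
    _ = ∫ ω, (Zpart ℓ β (lam P X β) Xf (m + 1) ω) ^ 2 ∂P := by
        rw [← integral_const_mul]
        simp_rw [Zpart_succ_eq_sum_pathEdges, mul_pow]
        rfl

theorem Zpart_second_moment_diverges_general {Ω : Type*} [MeasurableSpace Ω] (P : Measure Ω)
    [IsProbabilityMeasure P] (ℓ : ℕ) (hℓ : 3 ≤ ℓ) (β : ℝ)
    (X : Ω → ℝ)
    (hInt : ∀ s : ℝ, Integrable (fun ω => Real.exp (-s * X ω)) P)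
    (Xf : TreeWord ℓ → Ω → ℝ)
    (hindep : iIndepFun Xf P)
    (hident : ∀ w, IdentDistrib (Xf w) X P P)
    (hstrong : annealedCP P X ℓ β
        + β * (∫ ω, X ω * Real.exp (-β * X ω) ∂P) / lam P X β < 0) :
    1 < lam P X (2 * β) / (((ℓ : ℝ) - 1) * lam P X β ^ 2) ∧
    (∀ n : ℕ, 1 ≤ n →
      (((ℓ : ℝ) - 1) / ℓ) * (lam P X (2 * β) / (((ℓ : ℝ) - 1) * lam P X β ^ 2)) ^ n
        ≤ ∫ ω, (Zpart ℓ β (lam P X β) Xf n ω) ^ 2 ∂P) ∧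
    Filter.Tendsto (fun n => ∫ ω, (Zpart ℓ β (lam P X β) Xf n ω) ^ 2 ∂P)
      Filter.atTop Filter.atTop := by
  have hr := one_lt_lam_two_mul_div (by omega) hInt hstrong
  have hbound : ∀ n : ℕ, 1 ≤ n →
      (((ℓ : ℝ) - 1) / ℓ) * (lam P X (2 * β) / (((ℓ : ℝ) - 1) * lam P X β ^ 2)) ^ n
        ≤ ∫ ω, (Zpart ℓ β (lam P X β) Xf n ω) ^ 2 ∂P := fun n hn => by
    obtain ⟨m, rfl⟩ := Nat.exists_eq_add_of_le' hn
    exact le_integral_Zpart_succ_sq (by omega) (hInt (2 * β)) hindep hident m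
  have hℓ1 : (0 : ℝ) < ((ℓ : ℝ) - 1) / ℓ := by
    have : (3 : ℝ) ≤ ℓ := by exact_mod_cast hℓ
    exact div_pos (by linarith) (by linarith)
  refine ⟨hr, hbound, Filter.tendsto_atTop_mono' _ ?_
    ((tendsto_pow_atTop_atTop_of_one_lt hr).const_mul_atTop hℓ1)⟩
  filter_upwards [Filter.eventually_ge_atTop 1] with n hn using hbound n hn

/-- In the strong disorder regime `f(β) < 0` one has `r(2) = λ_{2β}/((ℓ-1)λ_β²) > 1`,
`𝔼[Z_n²] ≥ ((ℓ-1)/ℓ)·r(2)^n` for all `n ≥ 1`, and `𝔼[Z_n²] → ∞`. -/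
theorem Zpart_second_moment_diverges {Ω : Type*} [MeasurableSpace Ω] (P : Measure Ω)
    [IsProbabilityMeasure P] (ℓ : ℕ) (hℓ : 3 ≤ ℓ) (β : ℝ) (hβ : 0 < β)
    (X : Ω → ℝ) (hX : Measurable X)
    (hInt : ∀ s : ℝ, Integrable (fun ω => Real.exp (-s * X ω)) P)
    (Xf : TreeWord ℓ → Ω → ℝ) (hXf : ∀ w, Measurable (Xf w))
    (hindep : iIndepFun Xf P)
    (hident : ∀ w, IdentDistrib (Xf w) X P P)
    (hstrong : annealedCP P X ℓ β
        + β * (∫ ω, X ω * Real.exp (-β * X ω) ∂P) / lam P X β < 0) :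
    1 < lam P X (2 * β) / (((ℓ : ℝ) - 1) * lam P X β ^ 2) ∧
    (∀ n : ℕ, 1 ≤ n →
      (((ℓ : ℝ) - 1) / ℓ) * (lam P X (2 * β) / (((ℓ : ℝ) - 1) * lam P X β ^ 2)) ^ n
        ≤ ∫ ω, (Zpart ℓ β (lam P X β) Xf n ω) ^ 2 ∂P) ∧
    Filter.Tendsto (fun n => ∫ ω, (Zpart ℓ β (lam P X β) Xf n ω) ^ 2 ∂P)
      Filter.atTop Filter.atTop :=
  Zpart_second_moment_diverges_general P ℓ hℓ β X hInt Xf hindep hident hstrong
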